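/- Let R be a commutative ring and t ≥ 1 an integer. Let (Λ, ≤) be a directed preorder and (B_λ)_{λ∈Λ} a directed system of graded R-algebras (each with grading ℬ_λ and degree-zero component equal to the image of R), with transition maps u_{λμ} : B_λ → B_μ for λ ≤ μ that are R-algebra homomorphisms satisfying u_{λμ}(ℬ_λ n) ⊆ ℬ_μ n for all n. Let B be a graded R-algebra with grading ℬ together with R-algebra homomorphisms v_λ : B_λ → B satisfying v_μ ∘ u_{λμ} = v_λ and v_λ(ℬ_λ n) ⊆ ℬ n, and exhibiting B as the direct limit of the system, i.e.: every element of B lies in the image of some v_λ; whenever v_λ(b) = 0 there exists μ ≥ λ with u_{λμ}(b) = 0; and for each n, ℬ n is the union of the images v_λ(ℬ_λ n). If every B_λ is a t-pgg R-algebra, then B is a t-pgg R-algebra. -/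

import Mathlib

/-!
Partially generated graded algebras (pgg).

A graded `R`-algebra `A` (grading `𝒜 : ℕ → Submodule R A`) is `t`-pgg if the evaluation
map from the (weighted) polynomial ring on variables `X_(i,a)` (`1 ≤ i ≤ t`, `a ∈ 𝒜 i`,
`X_(i,a)` of weight `i`) sending `X_(i,a) ↦ a` is surjective and its kernel is generated
by weighted-homogeneous polynomials of weighted degree at most `t`.
-/

open MvPolynomial

/-- The variables `X_(i,a)` for `1 ≤ i ≤ t` and `a ∈ 𝒜 i`. -/
abbrev PggVars {R A : Type*} [CommRing R] [CommRing A] [Algebra R A]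
    (𝒜 : ℕ → Submodule R A) (t : ℕ) : Type _ :=
  Σ i : Set.Icc 1 t, 𝒜 (i : ℕ)

/-- The weight of the variable `X_(i,a)` is `i`. -/
def pggWeight {R A : Type*} [CommRing R] [CommRing A] [Algebra R A]
    (𝒜 : ℕ → Submodule R A) (t : ℕ) : PggVars 𝒜 t → ℕ :=
  fun v => (v.1 : ℕ)

/-- The evaluation homomorphism `ev_t`, sending `X_(i,a)` to `a`. -/
noncomputable def pggEval {R A : Type*} [CommRing R] [CommRing A] [Algebra R A]
    (𝒜 : ℕ → Submodule R A) (t : ℕ) :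
    MvPolynomial (PggVars 𝒜 t) R →ₐ[R] A :=
  aeval fun v => (v.2 : A)

/-- `A` is a `t`-partially generated graded (`t`-pgg) `R`-algebra: `ev_t` is surjective and
its kernel is generated by weighted-homogeneous polynomials of weighted degree at most `t`. -/
def IsPgg {R A : Type*} [CommRing R] [CommRing A] [Algebra R A]
    (𝒜 : ℕ → Submodule R A) (t : ℕ) : Prop :=
  Function.Surjective (pggEval 𝒜 t) ∧
  ∃ S : Set (MvPolynomial (PggVars 𝒜 t) R),
    (∀ p ∈ S, ∃ n ≤ t, p.IsWeightedHomogeneous (pggWeight 𝒜 t) n) ∧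
    RingHom.ker (pggEval 𝒜 t) = Ideal.span S

/-! A grading-preserving map `f` acts on the variables by `X_(i,a) ↦ X_(i,f a)`, compatibly with
weights and evaluation, so the relations of each stage push forward to weighted-homogeneous
relations at the limit. They generate all relations: a relation `q` at the limit involves only
finitely many variables, which all lift to one stage; the lifted polynomial evaluates to an
element that dies in the limit, hence already at some later stage, where it is a combination of
that stage's relations. -/

lemma Finsupp.weight_mapDomain {σ τ M : Type*} [AddCommMonoid M] (f : σ → τ) (w : τ → M)
    (d : σ →₀ ℕ) : weight w (mapDomain f d) = weight (w ∘ f) d := by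
  classical
  rw [weight_apply, weight_apply,
    sum_mapDomain_index (fun b => zero_smul ℕ (w b)) (fun _ _ _ => add_smul ..)]
  rfl

lemma MvPolynomial.IsWeightedHomogeneous.rename {σ τ R M : Type*} [CommSemiring R]
    [AddCommMonoid M] {w : σ → M} {w' : τ → M} {f : σ → τ} (hw : w' ∘ f = w)
    {p : MvPolynomial σ R} {m : M} (hp : p.IsWeightedHomogeneous w m) :
    (rename f p).IsWeightedHomogeneous w' m := by
  induction hp using IsWeightedHomogeneous.induction_on with
  | zero => simpa using isWeightedHomogeneous_zero R w' m
  | add p q _ _ hp hq => simpa using hp.add hq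
  | monomial d r hd =>
    rw [rename_monomial]
    exact isWeightedHomogeneous_monomial _ _ _ (by rw [Finsupp.weight_mapDomain, hw, hd])

lemma MvPolynomial.mem_range_rename_of_vars_subset_range {σ τ R : Type*} [CommSemiring R]
    {f : τ → σ} {p : MvPolynomial σ R} (hp : (p.vars : Set σ) ⊆ Set.range f) :
    p ∈ (rename (R := R) f).range := by
  have hle : Algebra.adjoin R (X '' Set.range f) ≤ (rename (R := R) f).range :=
    Algebra.adjoin_le <| by
      rintro _ ⟨_, ⟨a, rfl⟩, rfl⟩
      exact ⟨X a, rename_X f a⟩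
  exact hle (mem_supported.2 hp)

section PggVarMap

variable {R A A' A'' : Type*} [CommRing R] [CommRing A] [CommRing A'] [CommRing A'']
  [Algebra R A] [Algebra R A'] [Algebra R A''] {𝒜 : ℕ → Submodule R A}
  {𝒜' : ℕ → Submodule R A'} {𝒜'' : ℕ → Submodule R A''} {t : ℕ}

def pggVarMap (f : A →ₐ[R] A') (hf : ∀ n, ∀ x ∈ 𝒜 n, f x ∈ 𝒜' n) :
    PggVars 𝒜 t → PggVars 𝒜' t :=
  fun w => ⟨w.1, f w.2, hf _ _ w.2.2⟩

variable (f : A →ₐ[R] A') (hf : ∀ n, ∀ x ∈ 𝒜 n, f x ∈ 𝒜' n)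

lemma pggWeight_comp_pggVarMap :
    pggWeight 𝒜' t ∘ pggVarMap f hf = pggWeight 𝒜 t :=
  rfl

lemma pggEval_rename_pggVarMap (p : MvPolynomial (PggVars 𝒜 t) R) :
    pggEval 𝒜' t (rename (pggVarMap f hf) p) = f (pggEval 𝒜 t p) := by
  rw [pggEval, pggEval, aeval_rename, comp_aeval_apply]
  rfl

lemma pggVarMap_comp (g : A' →ₐ[R] A'') (hg : ∀ n, ∀ x ∈ 𝒜' n, g x ∈ 𝒜'' n)
    (h : A →ₐ[R] A'') (hh : ∀ n, ∀ x ∈ 𝒜 n, h x ∈ 𝒜'' n) (hgf : g.comp f = h) :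
    pggVarMap (t := t) g hg ∘ pggVarMap f hf = pggVarMap h hh := by
  subst hgf
  rfl

lemma map_ker_pggEval_le :
    (RingHom.ker (pggEval 𝒜 t)).map (rename (pggVarMap f hf)) ≤ RingHom.ker (pggEval 𝒜' t) :=
  Ideal.map_le_iff_le_comap.2 fun p hp => by
    rw [RingHom.mem_ker] at hp
    rw [Ideal.mem_comap, RingHom.mem_ker, pggEval_rename_pggVarMap, hp, map_zero]

end PggVarMap

lemma ker_pggEval_le_iSup_map {R : Type*} [CommRing R] {t : ℕ}
    {Λ : Type*} [Preorder Λ] [IsDirected Λ (· ≤ ·)] [Nonempty Λ]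
    {B : Λ → Type*} [∀ l, CommRing (B l)] [∀ l, Algebra R (B l)]
    {ℬl : ∀ l, ℕ → Submodule R (B l)} {u : ∀ {l m : Λ}, l ≤ m → (B l →ₐ[R] B m)}
    (hu_graded : ∀ {l m : Λ} (h : l ≤ m) (n : ℕ), ∀ x ∈ ℬl l n, u h x ∈ ℬl m n)
    {C : Type*} [CommRing C] [Algebra R C] {𝒞 : ℕ → Submodule R C} {v : ∀ l : Λ, B l →ₐ[R] C}
    (hv_comp : ∀ {l m : Λ} (h : l ≤ m), (v m).comp (u h) = v l)
    (hv_graded : ∀ (l : Λ) (n : ℕ), ∀ x ∈ ℬl l n, v l x ∈ 𝒞 n)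
    (hker : ∀ (l : Λ) (x : B l), v l x = 0 → ∃ (m : Λ) (h : l ≤ m), u h x = 0)
    (hgr_union : ∀ (n : ℕ), ∀ c ∈ 𝒞 n, ∃ (l : Λ) (x : B l), x ∈ ℬl l n ∧ v l x = c) :
    RingHom.ker (pggEval 𝒞 t) ≤
      ⨆ l, (RingHom.ker (pggEval (ℬl l) t)).map (rename (pggVarMap (v l) (hv_graded l))) := by
  intro q hq
  have hcomp {l m : Λ} (hlm : l ≤ m) :=
    pggVarMap_comp (t := t) _ (hu_graded hlm) _ (hv_graded m) _ (hv_graded l) (hv_comp hlm)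
  have hmono : Monotone fun l => Set.range (pggVarMap (t := t) (v l) (hv_graded l)) :=
    fun l m hlm => by
      simpa only [← hcomp hlm] using Set.range_comp_subset_range _ _
  have hcover : (q.vars : Set (PggVars 𝒞 t)) ⊆
      ⋃ l, Set.range (pggVarMap (t := t) (v l) (hv_graded l)) := fun w _ => by
    obtain ⟨l, x, hx, hxw⟩ := hgr_union w.1 w.2 w.2.2
    exact Set.mem_iUnion.2 ⟨l, ⟨w.1, x, hx⟩, congrArg (Sigma.mk w.1) (Subtype.ext hxw)⟩
  obtain ⟨l, hl⟩ := hmono.directed_le.exists_mem_subset_of_finset_subset_biUnion hcover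
  obtain ⟨p, rfl⟩ := (AlgHom.mem_range _).1 (mem_range_rename_of_vars_subset_range hl)
  rw [RingHom.mem_ker, pggEval_rename_pggVarMap] at hq
  obtain ⟨m, hlm, hum⟩ := hker l _ hq
  refine Ideal.mem_iSup_of_mem m ?_
  rw [← hcomp hlm, ← rename_rename]
  refine Ideal.mem_map_of_mem _ ?_
  rw [RingHom.mem_ker, pggEval_rename_pggVarMap, hum]

theorem stmt10_general {R : Type*} [CommRing R] (t : ℕ)
    {Λ : Type*} [Preorder Λ] [IsDirected Λ (· ≤ ·)]
    -- the directed system of graded `R`-algebras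
    (B : Λ → Type*) [∀ l, CommRing (B l)] [∀ l, Algebra R (B l)]
    (ℬl : ∀ l, ℕ → Submodule R (B l))
    (u : ∀ {l m : Λ}, l ≤ m → (B l →ₐ[R] B m))
    (hu_graded : ∀ {l m : Λ} (h : l ≤ m) (n : ℕ), ∀ x ∈ ℬl l n, u h x ∈ ℬl m n)
    -- the limit graded `R`-algebra
    (C : Type*) [CommRing C] [Algebra R C]
    (𝒞 : ℕ → Submodule R C)
    (v : ∀ l : Λ, B l →ₐ[R] C)
    (hv_comp : ∀ {l m : Λ} (h : l ≤ m), (v m).comp (u h) = v l)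
    (hv_graded : ∀ (l : Λ) (n : ℕ), ∀ x ∈ ℬl l n, v l x ∈ 𝒞 n)
    -- `C` is the direct limit of the system
    (hsurj : ∀ c : C, ∃ (l : Λ) (x : B l), v l x = c)
    (hker : ∀ (l : Λ) (x : B l), v l x = 0 → ∃ (m : Λ) (h : l ≤ m), u h x = 0)
    (hgr_union : ∀ (n : ℕ), ∀ c ∈ 𝒞 n, ∃ (l : Λ) (x : B l), x ∈ ℬl l n ∧ v l x = c)
    -- each stage is `t`-pgg
    (hpgg : ∀ l : Λ, IsPgg (ℬl l) t) :
    IsPgg 𝒞 t := by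
  have : Nonempty Λ := ⟨(hsurj 0).choose⟩
  choose S hS hkerS using fun l => (hpgg l).2
  refine ⟨fun c => ?_, ⋃ l, rename (pggVarMap (v l) (hv_graded l)) '' S l, ?_, ?_⟩
  · obtain ⟨l, x, rfl⟩ := hsurj c
    obtain ⟨p, rfl⟩ := (hpgg l).1 x
    exact ⟨_, pggEval_rename_pggVarMap (v l) (hv_graded l) p⟩
  · rintro _ ⟨_, ⟨l, rfl⟩, q, hq, rfl⟩
    obtain ⟨n, hn, hq⟩ := hS l q hq
    exact ⟨n, hn, hq.rename (pggWeight_comp_pggVarMap _ _)⟩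
  · simp only [Ideal.span_iUnion, ← Ideal.map_span, ← hkerS]
    exact le_antisymm (ker_pggEval_le_iSup_map hu_graded hv_comp hv_graded hker hgr_union)
      (iSup_le fun l => map_ker_pggEval_le (v l) (hv_graded l))

/-- **Proposition 5.15**: a direct limit of `t`-pgg graded `R`-algebras is `t`-pgg. -/
theorem stmt10 {R : Type*} [CommRing R] (t : ℕ) (ht : 1 ≤ t)
    {Λ : Type*} [Preorder Λ] [IsDirected Λ (· ≤ ·)]
    -- the directed system of graded `R`-algebras
    (B : Λ → Type*) [∀ l, CommRing (B l)] [∀ l, Algebra R (B l)]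
    (ℬl : ∀ l, ℕ → Submodule R (B l)) [∀ l, GradedAlgebra (ℬl l)]
    (h0l : ∀ l, ℬl l 0 = LinearMap.range (Algebra.linearMap R (B l)))
    (u : ∀ {l m : Λ}, l ≤ m → (B l →ₐ[R] B m))
    (hu_comp : ∀ {l m p : Λ} (h1 : l ≤ m) (h2 : m ≤ p), (u h2).comp (u h1) = u (h1.trans h2))
    (hu_graded : ∀ {l m : Λ} (h : l ≤ m) (n : ℕ), ∀ x ∈ ℬl l n, u h x ∈ ℬl m n)
    -- the limit graded `R`-algebra
    (C : Type*) [CommRing C] [Algebra R C]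
    (𝒞 : ℕ → Submodule R C) [GradedAlgebra 𝒞]
    (h0C : 𝒞 0 = LinearMap.range (Algebra.linearMap R C))
    (v : ∀ l : Λ, B l →ₐ[R] C)
    (hv_comp : ∀ {l m : Λ} (h : l ≤ m), (v m).comp (u h) = v l)
    (hv_graded : ∀ (l : Λ) (n : ℕ), ∀ x ∈ ℬl l n, v l x ∈ 𝒞 n)
    -- `C` is the direct limit of the system
    (hsurj : ∀ c : C, ∃ (l : Λ) (x : B l), v l x = c)
    (hker : ∀ (l : Λ) (x : B l), v l x = 0 → ∃ (m : Λ) (h : l ≤ m), u h x = 0)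
    (hgr_union : ∀ (n : ℕ), ∀ c ∈ 𝒞 n, ∃ (l : Λ) (x : B l), x ∈ ℬl l n ∧ v l x = c)
    -- each stage is `t`-pgg
    (hpgg : ∀ l : Λ, IsPgg (ℬl l) t) :
    IsPgg 𝒞 t :=
  stmt10_general t B ℬl u hu_graded C 𝒞 v hv_comp hv_graded hsurj hker hgr_union hpgg
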